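/- arXiv:2001.03835 — 6 statements merged into one kernel-verified Lean document; each statement's English description precedes it below -/
import Mathlib

section
/- Let S ∈ ℕ and let A^L be a cache strategy with |A^L_m| ≤ S for every m ∈ ℳ which is a coordinate-wise local optimum: for every SBS m ∈ ℳ and every set a ⊆ ℱ with |a| ≤ S, the cache strategy obtained from A^L by replacing A^L_m with a has total expected reward at most R_total(A^L). Then for every cache strategy A* with |A*_m| ≤ S for all m ∈ ℳ, R_total(A^L) ≥ (1/2)·R_total(A*); i.e., the coordinate ascent algorithm achieves at least 1/2 optimality of the single-period cache optimization problem (Lemma 1). -/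
open Finset
open scoped Classical

/-- Caching model: users `U`, SBSs `M`, files `F`, with neighbor sets, delays,
core-network delay `d0`, and user preference probabilities `p`. -/
structure CacheModel (U M F : Type*) where
  /-- neighbor SBSs of each user -/
  neigh : U → Finset M
  neigh_nonempty : ∀ u, (neigh u).Nonempty
  /-- transmission delay `d m u` between SBS `m` and user `u` -/
  d : M → U → ℝ
  /-- core network delay -/
  d0 : ℝ
  d0_pos : 0 < d0
  d_pos : ∀ u, ∀ m ∈ neigh u, 0 < d m u
  d_lt_d0 : ∀ u, ∀ m ∈ neigh u, d m u < d0
  d_inj : ∀ u, ∀ m ∈ neigh u, ∀ n ∈ neigh u, d m u = d n u → m = n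
  /-- preference probability `p u f` that user `u` requests file `f` -/
  p : U → F → ℝ
  p_nonneg : ∀ u f, 0 ≤ p u f
  p_le_one : ∀ u f, p u f ≤ 1

namespace CacheModel

variable {U M F : Type*} [Fintype U] [Fintype M] [Fintype F]

/-- SBS `m` serves the request `(u, f)` under cache strategy `A`. -/
def serves (cm : CacheModel U M F) (A : M → Finset F) (u : U) (f : F) (m : M) : Prop :=
  m ∈ cm.neigh u ∧ f ∈ A m ∧ ∀ n ∈ cm.neigh u, cm.d n u < cm.d m u → f ∉ A n

/-- The neighbor users `𝒰_m` of SBS `m`. -/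
noncomputable def users (cm : CacheModel U M F) (m : M) : Finset U :=
  Finset.univ.filter fun u => m ∈ cm.neigh u

/-- Expected reward `r_{m,f}(A)` of SBS `m` for file `f` under cache strategy `A`. -/
noncomputable def r (cm : CacheModel U M F) (A : M → Finset F) (m : M) (f : F) : ℝ :=
  ∑ u ∈ cm.users m,
    cm.p u f * (cm.d0 - cm.d m u) * (if cm.serves A u f m then 1 else 0)

/-- Total expected reward `R_total(A)`. -/
noncomputable def Rtot (cm : CacheModel U M F) (A : M → Finset F) : ℝ :=
  ∑ m, ∑ f, cm.r A m f

end CacheModel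

namespace CacheModel

variable {U M F : Type*} [Fintype U] [Fintype M] [Fintype F]

/-- Per-(user, file) value of a cache strategy. -/
noncomputable def V (cm : CacheModel U M F) (A : M → Finset F) (u : U) (f : F) : ℝ :=
  ∑ m, if cm.serves A u f m then cm.p u f * (cm.d0 - cm.d m u) else 0

lemma Rtot_eq_sum_V (cm : CacheModel U M F) (A : M → Finset F) :
    cm.Rtot A = ∑ u, ∑ f, cm.V A u f := by
  have h : ∀ m f_1, (∑ u ∈ cm.users m,
      cm.p u f_1 * (cm.d0 - cm.d m u) * (if cm.serves A u f_1 m then 1 else 0))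
      = ∑ u, if cm.serves A u f_1 m then cm.p u f_1 * (cm.d0 - cm.d m u) else 0 := by
    intro m f
    rw [users, Finset.sum_filter]
    refine Finset.sum_congr rfl fun u _ => ?_
    by_cases hs : cm.serves A u f m
    · simp [hs, hs.1]
    · simp [hs]
  simp only [Rtot, r, h, V]
  calc (∑ m, ∑ f_1, ∑ u, if cm.serves A u f_1 m then cm.p u f_1 * (cm.d0 - cm.d m u) else 0)
      = ∑ f_1, ∑ m, ∑ u, if cm.serves A u f_1 m then cm.p u f_1 * (cm.d0 - cm.d m u) else 0 :=
        Finset.sum_comm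
    _ = ∑ f_1, ∑ u, ∑ m, if cm.serves A u f_1 m then cm.p u f_1 * (cm.d0 - cm.d m u) else 0 :=
        Finset.sum_congr rfl fun _ _ => Finset.sum_comm
    _ = ∑ u, ∑ f_1, ∑ m, if cm.serves A u f_1 m then cm.p u f_1 * (cm.d0 - cm.d m u) else 0 :=
        Finset.sum_comm

lemma serves_unique (cm : CacheModel U M F) (A : M → Finset F) (u : U) (f : F) {m n : M}
    (hm : cm.serves A u f m) (hn : cm.serves A u f n) : m = n := by
  rcases lt_trichotomy (cm.d m u) (cm.d n u) with h | h | h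
  · exact absurd hm.2.1 (hn.2.2 m hm.1 h)
  · exact cm.d_inj u m hm.1 n hn.1 h
  · exact absurd hn.2.1 (hm.2.2 n hn.1 h)

lemma exists_serves (cm : CacheModel U M F) (A : M → Finset F) (u : U) (f : F) {n : M}
    (hn : n ∈ cm.neigh u) (hf : f ∈ A n) :
    ∃ m, cm.serves A u f m ∧ cm.d m u ≤ cm.d n u := by
  classical
  set s := (cm.neigh u).filter (fun m => f ∈ A m) with hs
  have hne : s.Nonempty := ⟨n, by simp [hs, hn, hf]⟩
  obtain ⟨m, hm, hmin⟩ := s.exists_min_image (fun m => cm.d m u) hne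
  rw [hs, Finset.mem_filter] at hm
  refine ⟨m, ⟨hm.1, hm.2, fun k hk hdk hfk => ?_⟩, hmin n (by simp [hs, hn, hf])⟩
  have := hmin k (by simp [hs, hk, hfk])
  exact absurd hdk (not_lt.2 this)

lemma V_eq_of_serves (cm : CacheModel U M F) (A : M → Finset F) (u : U) (f : F) {m : M}
    (hm : cm.serves A u f m) : cm.V A u f = cm.p u f * (cm.d0 - cm.d m u) := by
  rw [V, Finset.sum_eq_single m]
  · rw [if_pos hm]
  · intro n _ hne
    rw [if_neg fun hn => hne (cm.serves_unique A u f hn hm)]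
  · intro h; exact absurd (Finset.mem_univ m) h

lemma V_nonneg (cm : CacheModel U M F) (A : M → Finset F) (u : U) (f : F) :
    0 ≤ cm.V A u f := by
  refine Finset.sum_nonneg fun m _ => ?_
  by_cases h : cm.serves A u f m
  · rw [if_pos h]
    have h1 := cm.d_lt_d0 u m h.1
    exact mul_nonneg (cm.p_nonneg u f) (by linarith)
  · rw [if_neg h]

lemma V_ge (cm : CacheModel U M F) (A : M → Finset F) (u : U) (f : F) {n : M}
    (hn : n ∈ cm.neigh u) (hf : f ∈ A n) :
    cm.p u f * (cm.d0 - cm.d n u) ≤ cm.V A u f := by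
  obtain ⟨m, hm, hd⟩ := cm.exists_serves A u f hn hf
  rw [cm.V_eq_of_serves A u f hm]
  have hp := cm.p_nonneg u f
  nlinarith

lemma V_eq_zero (cm : CacheModel U M F) (A : M → Finset F) (u : U) (f : F)
    (h : ¬ ∃ m, cm.serves A u f m) : cm.V A u f = 0 :=
  Finset.sum_eq_zero fun m _ => if_neg fun hm => h ⟨m, hm⟩

lemma sum_ite_serves (cm : CacheModel U M F) (A : M → Finset F) (u : U) (f : F) (c : ℝ) :
    (∑ m, if cm.serves A u f m then c else 0) = if ∃ m, cm.serves A u f m then c else 0 := by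
  by_cases h : ∃ m, cm.serves A u f m
  · obtain ⟨m0, hm0⟩ := h
    rw [if_pos ⟨m0, hm0⟩, Finset.sum_eq_single m0, if_pos hm0]
    · intro n _ hne
      exact if_neg fun hn => hne (cm.serves_unique A u f hn hm0)
    · intro h; exact absurd (Finset.mem_univ m0) h
  · rw [if_neg h]
    exact Finset.sum_eq_zero fun m _ => if_neg fun hm => h ⟨m, hm⟩

lemma key_ineq (cm : CacheModel U M F) (AL Astar : M → Finset F) (u : U) (f : F) :
    cm.V Astar u f - 2 * cm.V AL u f ≤
      ∑ m, (cm.V (Function.update AL m (Astar m)) u f - cm.V AL u f) := by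
  have hvL : 0 ≤ cm.V AL u f := cm.V_nonneg AL u f
  have hpt : ∀ m, ((if cm.serves Astar u f m then cm.V Astar u f - cm.V AL u f else 0)
      - (if cm.serves AL u f m then cm.V AL u f else 0))
      ≤ cm.V (Function.update AL m (Astar m)) u f - cm.V AL u f := by
    intro m
    have hnn := cm.V_nonneg (Function.update AL m (Astar m)) u f
    by_cases hS : cm.serves Astar u f m
    · have h1 : cm.V Astar u f ≤ cm.V (Function.update AL m (Astar m)) u f := by
        have hmem : f ∈ Function.update AL m (Astar m) m := by
          rw [Function.update_self]; exact hS.2.1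
        have h2 := cm.V_ge (Function.update AL m (Astar m)) u f hS.1 hmem
        rw [cm.V_eq_of_serves Astar u f hS]
        exact h2
      by_cases hL : cm.serves AL u f m
      · rw [if_pos hS, if_pos hL]; linarith
      · rw [if_pos hS, if_neg hL]; linarith
    · by_cases hL : cm.serves AL u f m
      · rw [if_neg hS, if_pos hL]; linarith
      · rw [if_neg hS, if_neg hL]
        by_cases hEx : ∃ mL, cm.serves AL u f mL
        · obtain ⟨mL, hmL⟩ := hEx
          have hne : mL ≠ m := fun h => hL (h ▸ hmL)
          have hmem : f ∈ Function.update AL m (Astar m) mL := by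
            rw [Function.update_of_ne hne]; exact hmL.2.1
          have h2 := cm.V_ge (Function.update AL m (Astar m)) u f hmL.1 hmem
          rw [cm.V_eq_of_serves AL u f hmL]
          linarith
        · rw [cm.V_eq_zero AL u f hEx]
          linarith
  calc cm.V Astar u f - 2 * cm.V AL u f
      ≤ ∑ m, ((if cm.serves Astar u f m then cm.V Astar u f - cm.V AL u f else 0)
        - (if cm.serves AL u f m then cm.V AL u f else 0)) := by
        rw [Finset.sum_sub_distrib,
          cm.sum_ite_serves Astar u f (cm.V Astar u f - cm.V AL u f),
          cm.sum_ite_serves AL u f (cm.V AL u f)]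
        by_cases hS : ∃ m, cm.serves Astar u f m <;>
          by_cases hL : ∃ m, cm.serves AL u f m
        · rw [if_pos hS, if_pos hL]; linarith
        · have h2 := cm.V_eq_zero AL u f hL
          rw [if_pos hS, if_neg hL]; linarith
        · have h1 := cm.V_eq_zero Astar u f hS
          rw [if_neg hS, if_pos hL]; linarith
        · have h1 := cm.V_eq_zero Astar u f hS
          have h2 := cm.V_eq_zero AL u f hL
          rw [if_neg hS, if_neg hL]; linarith
    _ ≤ _ := Finset.sum_le_sum fun m _ => hpt m

end CacheModel

/-- **Lemma 1.** Any coordinate-wise local optimum `A^L` of the single-period cache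
optimization problem (under the per-SBS cache-size constraint `S`) achieves at least
half of the optimal total expected reward. -/
theorem coordinate_ascent_half_optimality
    {U M F : Type*} [Fintype U] [Fintype M] [Fintype F]
    (cm : CacheModel U M F) (S : ℕ) (AL : M → Finset F)
    (hALcard : ∀ m, (AL m).card ≤ S)
    (hlocal : ∀ (m : M) (a : Finset F), a.card ≤ S →
      cm.Rtot (Function.update AL m a) ≤ cm.Rtot AL)
    (Astar : M → Finset F) (hAstarcard : ∀ m, (Astar m).card ≤ S) :
    (1 / 2 : ℝ) * cm.Rtot Astar ≤ cm.Rtot AL := by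
  have h1 : ∑ m, (cm.Rtot (Function.update AL m (Astar m)) - cm.Rtot AL) ≤ 0 :=
    Finset.sum_nonpos fun m _ => sub_nonpos.2 (hlocal m (Astar m) (hAstarcard m))
  have h2 : cm.Rtot Astar - 2 * cm.Rtot AL ≤
      ∑ m, (cm.Rtot (Function.update AL m (Astar m)) - cm.Rtot AL) := by
    simp only [CacheModel.Rtot_eq_sum_V, ← Finset.sum_sub_distrib]
    have hswap : (∑ m, ∑ u, ∑ f,
        (cm.V (Function.update AL m (Astar m)) u f - cm.V AL u f))
        = ∑ u, ∑ f, ∑ m, (cm.V (Function.update AL m (Astar m)) u f - cm.V AL u f) := by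
      rw [Finset.sum_comm]
      exact Finset.sum_congr rfl fun u _ => Finset.sum_comm
    rw [hswap, Finset.mul_sum]
    rw [← Finset.sum_sub_distrib]
    refine Finset.sum_le_sum fun u _ => ?_
    rw [Finset.mul_sum, ← Finset.sum_sub_distrib]
    exact Finset.sum_le_sum fun f _ => cm.key_ineq AL Astar u f
  linarith
end

section
/- The total expected reward is monotone in the caches: if A and A' are cache strategies with A_m ⊆ A'_m for every m ∈ ℳ, then R_total(A) ≤ R_total(A') (caching more files never decreases the total reward; step (a) of the proof of Lemma 1). -/
open Finset
open scoped Classical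

section Aux
variable {U M F : Type*} [Fintype U] [Fintype M] [Fintype F]

lemma CacheModel.serves_unique_s1 (cm : CacheModel U M F) (A : M → Finset F)
    {u : U} {f : F} {m m' : M}
    (h : cm.serves A u f m) (h' : cm.serves A u f m') : m = m' := by
  rcases lt_trichotomy (cm.d m u) (cm.d m' u) with hlt | heq | hgt
  · exact absurd h.2.1 (h'.2.2 m h.1 hlt)
  · exact cm.d_inj u m h.1 m' h'.1 heq
  · exact absurd h'.2.1 (h.2.2 m' h'.1 hgt)

lemma CacheModel.term_nonneg (cm : CacheModel U M F) (A : M → Finset F)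
    (u : U) (f : F) (m : M) :
    0 ≤ cm.p u f * (cm.d0 - cm.d m u) * (if cm.serves A u f m then 1 else 0) := by
  by_cases h : cm.serves A u f m
  · rw [if_pos h, mul_one]
    have := cm.d_lt_d0 u m h.1
    have := cm.p_nonneg u f
    nlinarith
  · rw [if_neg h, mul_zero]

lemma CacheModel.sum_serves (cm : CacheModel U M F) (A : M → Finset F)
    {u : U} {f : F} {m₀ : M} (h₀ : cm.serves A u f m₀) :
    (∑ m, cm.p u f * (cm.d0 - cm.d m u) * (if cm.serves A u f m then 1 else 0))
      = cm.p u f * (cm.d0 - cm.d m₀ u) := by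
  rw [Finset.sum_eq_single_of_mem m₀ (Finset.mem_univ _)]
  · rw [if_pos h₀, mul_one]
  · intro b _ hb
    rw [if_neg fun hs => hb (cm.serves_unique_s1 A hs h₀), mul_zero]

end Aux

/-- **Monotonicity of the total expected reward** (step (a) of the proof of Lemma 1):
caching more files never decreases the total reward. -/
theorem Rtot_monotone
    {U M F : Type*} [Fintype U] [Fintype M] [Fintype F]
    (cm : CacheModel U M F) (A A' : M → Finset F)
    (hsub : ∀ m, A m ⊆ A' m) :
    cm.Rtot A ≤ cm.Rtot A' := by
  have hrw : ∀ B : M → Finset F, cm.Rtot B =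
      ∑ u, ∑ f, ∑ m, cm.p u f * (cm.d0 - cm.d m u) *
        (if cm.serves B u f m then 1 else 0) := by
    intro B
    unfold CacheModel.Rtot CacheModel.r
    trans (∑ m, ∑ f, ∑ u, cm.p u f * (cm.d0 - cm.d m u) *
        (if cm.serves B u f m then 1 else 0))
    · refine Finset.sum_congr rfl fun m _ => Finset.sum_congr rfl fun f _ => ?_
      refine Finset.sum_subset (Finset.subset_univ _) fun u _ hu => ?_
      have hns : ¬ cm.serves B u f m := fun hs => hu (by
        simp [CacheModel.users, hs.1])
      rw [if_neg hns, mul_zero]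
    rw [Finset.sum_comm]
    trans (∑ f, ∑ u, ∑ m, cm.p u f * (cm.d0 - cm.d m u) *
        (if cm.serves B u f m then 1 else 0))
    · exact Finset.sum_congr rfl fun f _ => Finset.sum_comm
    exact Finset.sum_comm
  rw [hrw A, hrw A']
  refine Finset.sum_le_sum fun u _ => Finset.sum_le_sum fun f _ => ?_
  by_cases hA : ∃ m, cm.serves A u f m
  · obtain ⟨m₀, hm₀⟩ := hA
    -- find serving SBS under A'
    have hT : ((cm.neigh u).filter (fun n => f ∈ A' n)).Nonempty :=
      ⟨m₀, Finset.mem_filter.mpr ⟨hm₀.1, hsub m₀ hm₀.2.1⟩⟩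
    obtain ⟨m', hm'T, hmin⟩ := Finset.exists_min_image _ (fun n => cm.d n u) hT
    rw [Finset.mem_filter] at hm'T
    have hserve' : cm.serves A' u f m' := by
      refine ⟨hm'T.1, hm'T.2, fun n hn hdn hfn => ?_⟩
      exact absurd (hmin n (Finset.mem_filter.mpr ⟨hn, hfn⟩)) (not_le.mpr hdn)
    rw [cm.sum_serves A hm₀, cm.sum_serves A' hserve']
    have hd : cm.d m' u ≤ cm.d m₀ u :=
      hmin m₀ (Finset.mem_filter.mpr ⟨hm₀.1, hsub m₀ hm₀.2.1⟩)
    have := cm.p_nonneg u f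
    nlinarith
  · have hz : (∑ m, cm.p u f * (cm.d0 - cm.d m u) *
        (if cm.serves A u f m then 1 else 0)) = 0 := by
      refine Finset.sum_eq_zero fun m _ => ?_
      rw [if_neg fun hs => hA ⟨m, hs⟩, mul_zero]
    rw [hz]
    exact Finset.sum_nonneg fun m _ => cm.term_nonneg A' u f m
end

section
/- The marginal gain of a joint cache augmentation is at most the sum of individual marginal gains: for any cache strategies A and A', letting A ⊔ A' denote the strategy with (A ⊔ A')_m = A_m ∪ A'_m, one has R_total(A ⊔ A') − R_total(A') ≤ Σ_{m ∈ ℳ} [ R_total(A'[m := A'_m ∪ A_m]) − R_total(A') ], where A'[m := s] denotes the strategy obtained from A' by replacing the cache of SBS m with s (step (b) of the proof of Lemma 1). -/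
open Finset
open scoped Classical

section Dv

variable {M : Type*}

/-- `d0` minus the minimum of `w` over `S`, or `0` if `S` is empty. -/
noncomputable def Dv (d0 : ℝ) (w : M → ℝ) (S : Finset M) : ℝ :=
  if h : S.Nonempty then d0 - S.inf' h w else 0

theorem Dv_empty (d0 : ℝ) (w : M → ℝ) : Dv d0 w (∅ : Finset M) = 0 := by
  simp [Dv]

theorem Dv_of_nonempty (d0 : ℝ) (w : M → ℝ) {S : Finset M} (h : S.Nonempty) :
    Dv d0 w S = d0 - S.inf' h w := by
  simp [Dv, h]

theorem Dv_nonneg {d0 : ℝ} {w : M → ℝ} {S : Finset M}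
    (hw : ∀ m ∈ S, w m < d0) : 0 ≤ Dv d0 w S := by
  rcases S.eq_empty_or_nonempty with rfl | h
  · simp [Dv]
  · rw [Dv_of_nonempty d0 w h]
    obtain ⟨m, hm, hme⟩ := Finset.exists_mem_eq_inf' h w
    rw [hme]
    linarith [hw m hm]

theorem Dv_mono {d0 : ℝ} {w : M → ℝ} {S S' : Finset M} (hss : S ⊆ S')
    (hw : ∀ m ∈ S', w m < d0) : Dv d0 w S ≤ Dv d0 w S' := by
  rcases S.eq_empty_or_nonempty with rfl | h
  · rw [Dv_empty]; exact Dv_nonneg hw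
  · rw [Dv_of_nonempty d0 w h, Dv_of_nonempty d0 w (h.mono hss)]
    have := Finset.inf'_mono w hss h
    linarith

/-- Key submodularity-type inequality for `Dv`. -/
theorem Dv_union_le {d0 : ℝ} {w : M → ℝ} {N S T : Finset M}
    (hS : S ⊆ N) (hT : T ⊆ N) (hw : ∀ m ∈ N, w m < d0) :
    Dv d0 w (S ∪ T) - Dv d0 w T ≤ ∑ m ∈ S, (Dv d0 w (insert m T) - Dv d0 w T) := by
  classical
  have hterm : ∀ m ∈ S, 0 ≤ Dv d0 w (insert m T) - Dv d0 w T := by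
    intro m hm
    have : Dv d0 w T ≤ Dv d0 w (insert m T) := by
      refine Dv_mono (Finset.subset_insert m T) ?_
      intro n hn
      rcases Finset.mem_insert.mp hn with rfl | hn
      · exact hw n (hS hm)
      · exact hw n (hT hn)
    linarith
  rcases (S ∪ T).eq_empty_or_nonempty with he | hne
  · have hSe : S = ∅ := Finset.union_eq_empty.mp he |>.1
    have hTe : T = ∅ := Finset.union_eq_empty.mp he |>.2
    simp [hSe, hTe, Dv_empty]
  · obtain ⟨m0, hm0, hm0e⟩ := Finset.exists_mem_eq_inf' hne w
    rcases Finset.mem_union.mp hm0 with hm0S | hm0T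
    · -- minimum attained in S
      have h1 : Dv d0 w (S ∪ T) = Dv d0 w (insert m0 T) := by
        have hsub : insert m0 T ⊆ S ∪ T := by
          intro n hn
          rcases Finset.mem_insert.mp hn with rfl | hn
          · exact hm0
          · exact Finset.mem_union_right _ hn
        have hne' : (insert m0 T).Nonempty := ⟨m0, Finset.mem_insert_self _ _⟩
        rw [Dv_of_nonempty d0 w hne, Dv_of_nonempty d0 w hne']
        have h2 : (S ∪ T).inf' hne w ≤ (insert m0 T).inf' hne' w :=
          Finset.inf'_mono w hsub hne'
        have h3 : (insert m0 T).inf' hne' w ≤ w m0 :=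
          Finset.inf'_le w (Finset.mem_insert_self _ _)
        rw [hm0e] at h2 ⊢
        rw [le_antisymm h3 h2]
      rw [h1]
      exact Finset.single_le_sum hterm hm0S
    · -- minimum attained in T : Dv (S ∪ T) = Dv T
      have hTne : T.Nonempty := ⟨m0, hm0T⟩
      have h1 : Dv d0 w (S ∪ T) = Dv d0 w T := by
        rw [Dv_of_nonempty d0 w hne, Dv_of_nonempty d0 w hTne]
        have h2 : (S ∪ T).inf' hne w ≤ T.inf' hTne w :=
          Finset.inf'_mono w Finset.subset_union_right hTne
        have h3 : T.inf' hTne w ≤ w m0 := Finset.inf'_le w hm0T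
        rw [hm0e]
        rw [hm0e] at h2
        have := le_antisymm h2 (by linarith)
        rw [this]
      rw [h1]
      simp only [sub_self]
      exact Finset.sum_nonneg hterm

end Dv

namespace CacheModel

variable {U M F : Type*} [Fintype U] [Fintype M] [Fintype F]

/-- Set of neighbor SBSs of `u` that cache `f` under `A`. -/
noncomputable def cached (cm : CacheModel U M F) (A : M → Finset F) (u : U) (f : F) :
    Finset M :=
  (cm.neigh u).filter fun m => f ∈ A m

/-- Per-request value. -/
noncomputable def val (cm : CacheModel U M F) (A : M → Finset F) (u : U) (f : F) : ℝ :=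
  ∑ m ∈ cm.neigh u, cm.p u f * (cm.d0 - cm.d m u) * (if cm.serves A u f m then 1 else 0)

theorem Rtot_eq_sum_val (cm : CacheModel U M F) (A : M → Finset F) :
    cm.Rtot A = ∑ u, ∑ f, cm.val A u f := by
  classical
  unfold Rtot r val users
  simp_rw [Finset.sum_filter]
  have swap3 : ∀ g : M → F → U → ℝ,
      ∑ m, ∑ f, ∑ u, g m f u = ∑ u, ∑ f, ∑ m, g m f u := by
    intro g
    rw [show (∑ m, ∑ f, ∑ u, g m f u) = ∑ m, ∑ u, ∑ f, g m f u from
      Finset.sum_congr rfl fun m _ => Finset.sum_comm]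
    rw [Finset.sum_comm]
    exact Finset.sum_congr rfl fun u _ => Finset.sum_comm
  rw [swap3]
  refine Finset.sum_congr rfl fun u _ => Finset.sum_congr rfl fun f _ => ?_
  rw [show (∑ m ∈ cm.neigh u, cm.p u f * (cm.d0 - cm.d m u) *
      (if cm.serves A u f m then 1 else 0)) =
      ∑ m ∈ Finset.univ ∩ cm.neigh u, cm.p u f * (cm.d0 - cm.d m u) *
      (if cm.serves A u f m then 1 else 0) from by rw [Finset.univ_inter]]
  rw [← Finset.sum_ite_mem]

theorem val_eq (cm : CacheModel U M F) (A : M → Finset F) (u : U) (f : F) :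
    cm.val A u f = cm.p u f * Dv cm.d0 (fun m => cm.d m u) (cm.cached A u f) := by
  classical
  rcases (cm.cached A u f).eq_empty_or_nonempty with he | hne
  · have hns : ∀ m ∈ cm.neigh u, ¬ cm.serves A u f m := by
      intro m hm hs
      have : m ∈ cm.cached A u f := Finset.mem_filter.mpr ⟨hm, hs.2.1⟩
      simp [he] at this
    rw [he, Dv_empty]
    unfold val
    rw [Finset.sum_eq_zero, mul_zero]
    intro m hm
    simp [hns m hm]
  · obtain ⟨m0, hm0, hm0e⟩ := Finset.exists_mem_eq_inf' hne (fun m => cm.d m u)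
    have hm0n : m0 ∈ cm.neigh u := (Finset.mem_filter.mp hm0).1
    have hm0f : f ∈ A m0 := (Finset.mem_filter.mp hm0).2
    have hserves : cm.serves A u f m0 := by
      refine ⟨hm0n, hm0f, ?_⟩
      intro n hn hlt hfn
      have hnc : n ∈ cm.cached A u f := Finset.mem_filter.mpr ⟨hn, hfn⟩
      have h : (cm.cached A u f).inf' hne (fun m => cm.d m u) ≤ cm.d n u :=
        Finset.inf'_le (fun m => cm.d m u) hnc
      rw [hm0e] at h
      linarith
    have huniq : ∀ m ∈ cm.neigh u, cm.serves A u f m → m = m0 := by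
      intro m hm hs
      have hmc : m ∈ cm.cached A u f := Finset.mem_filter.mpr ⟨hm, hs.2.1⟩
      have h1 : cm.d m0 u ≤ cm.d m u := by
        have h : (cm.cached A u f).inf' hne (fun m => cm.d m u) ≤ cm.d m u :=
          Finset.inf'_le (fun m => cm.d m u) hmc
        rw [hm0e] at h; exact h
      have h2 : ¬ cm.d m0 u < cm.d m u := fun hlt => hs.2.2 m0 hm0n hlt hm0f
      exact cm.d_inj u m hm m0 hm0n (le_antisymm (not_lt.mp h2) h1)
    unfold val
    rw [Finset.sum_eq_single_of_mem m0 hm0n]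
    · rw [if_pos hserves, Dv_of_nonempty _ _ hne, hm0e]; ring
    · intro m hm hne'
      rw [if_neg, mul_zero]
      intro hs; exact hne' (huniq m hm hs)

theorem cached_union (cm : CacheModel U M F) (A A' : M → Finset F) (u : U) (f : F) :
    cm.cached (fun m => A m ∪ A' m) u f = cm.cached A u f ∪ cm.cached A' u f := by
  ext n
  simp only [cached, Finset.mem_filter, Finset.mem_union]
  tauto

theorem cached_update_mem (cm : CacheModel U M F) (A A' : M → Finset F) (u : U) (f : F)
    {m : M} (hm : m ∈ cm.cached A u f) :
    cm.cached (Function.update A' m (A' m ∪ A m)) u f = insert m (cm.cached A' u f) := by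
  classical
  obtain ⟨hmn, hmf⟩ := Finset.mem_filter.mp hm
  ext n
  simp only [cached, Finset.mem_filter, Finset.mem_insert]
  by_cases hnm : n = m
  · subst hnm
    simp [Function.update_self, hmn, hmf]
  · simp [Function.update_of_ne hnm, hnm]

theorem cached_update_not_mem (cm : CacheModel U M F) (A A' : M → Finset F) (u : U) (f : F)
    {m : M} (hm : m ∉ cm.cached A u f) :
    cm.cached (Function.update A' m (A' m ∪ A m)) u f = cm.cached A' u f := by
  classical
  ext n
  simp only [cached, Finset.mem_filter]
  by_cases hnm : n = m
  · subst hnm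
    simp only [cached, Finset.mem_filter, not_and] at hm
    constructor
    · rintro ⟨hn, hf⟩
      rw [Function.update_self, Finset.mem_union] at hf
      rcases hf with hf | hf
      · exact ⟨hn, hf⟩
      · exact absurd hf (hm hn)
    · rintro ⟨hn, hf⟩
      exact ⟨hn, by rw [Function.update_self, Finset.mem_union]; exact Or.inl hf⟩
  · simp [Function.update_of_ne hnm]

theorem val_pointwise (cm : CacheModel U M F) (A A' : M → Finset F) (u : U) (f : F) :
    cm.val (fun m => A m ∪ A' m) u f - cm.val A' u f ≤
      ∑ m : M, (cm.val (Function.update A' m (A' m ∪ A m)) u f - cm.val A' u f) := by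
  classical
  simp only [val_eq]
  set w : M → ℝ := fun m => cm.d m u with hw_def
  set S := cm.cached A u f with hS_def
  set T := cm.cached A' u f with hT_def
  have hw : ∀ n ∈ cm.neigh u, w n < cm.d0 := fun n hn => cm.d_lt_d0 u n hn
  have hSsub : S ⊆ cm.neigh u := Finset.filter_subset _ _
  have hTsub : T ⊆ cm.neigh u := Finset.filter_subset _ _
  have key : Dv cm.d0 w (S ∪ T) - Dv cm.d0 w T ≤
      ∑ m : M, (Dv cm.d0 w (cm.cached (Function.update A' m (A' m ∪ A m)) u f)
        - Dv cm.d0 w T) := by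
    have hsum : ∑ m : M, (Dv cm.d0 w (cm.cached (Function.update A' m (A' m ∪ A m)) u f)
        - Dv cm.d0 w T) = ∑ m ∈ S, (Dv cm.d0 w (insert m T) - Dv cm.d0 w T) := by
      rw [show (∑ m ∈ S, (Dv cm.d0 w (insert m T) - Dv cm.d0 w T)) =
          ∑ m ∈ Finset.univ ∩ S, (Dv cm.d0 w (insert m T) - Dv cm.d0 w T) from by
            rw [Finset.univ_inter],
        ← Finset.sum_ite_mem]
      refine Finset.sum_congr rfl fun m _ => ?_
      by_cases hm : m ∈ S
      · rw [if_pos hm, cm.cached_update_mem A A' u f hm]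
      · rw [if_neg hm, cm.cached_update_not_mem A A' u f hm, sub_self]
    rw [hsum]
    exact Dv_union_le hSsub hTsub hw
  have hp := cm.p_nonneg u f
  calc cm.p u f * Dv cm.d0 w (cm.cached (fun m => A m ∪ A' m) u f) - cm.p u f * Dv cm.d0 w T
      = cm.p u f * (Dv cm.d0 w (S ∪ T) - Dv cm.d0 w T) := by
        rw [cm.cached_union A A' u f, mul_sub]
    _ ≤ cm.p u f * ∑ m : M, (Dv cm.d0 w (cm.cached (Function.update A' m (A' m ∪ A m)) u f)
        - Dv cm.d0 w T) := mul_le_mul_of_nonneg_left key hp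
    _ = ∑ m : M, (cm.p u f * Dv cm.d0 w (cm.cached (Function.update A' m (A' m ∪ A m)) u f)
        - cm.p u f * Dv cm.d0 w T) := by
        rw [Finset.mul_sum]
        exact Finset.sum_congr rfl fun m _ => mul_sub _ _ _

end CacheModel



/-- **Step (b) of the proof of Lemma 1**: the marginal gain of a joint cache
augmentation is at most the sum of the individual marginal gains. -/
theorem Rtot_union_marginal_le_sum_marginals
    {U M F : Type*} [Fintype U] [Fintype M] [Fintype F]
    (cm : CacheModel U M F) (A A' : M → Finset F) :
    cm.Rtot (fun m => A m ∪ A' m) - cm.Rtot A' ≤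
      ∑ m : M, (cm.Rtot (Function.update A' m (A' m ∪ A m)) - cm.Rtot A') := by
  classical
  simp only [CacheModel.Rtot_eq_sum_val]
  have swap3 : ∀ g : M → U → F → ℝ,
      ∑ m, ∑ u, ∑ f, g m u f = ∑ u, ∑ f, ∑ m, g m u f := by
    intro g
    calc ∑ m, ∑ u, ∑ f, g m u f
        = ∑ u, ∑ m, ∑ f, g m u f := Finset.sum_comm
      _ = ∑ u, ∑ f, ∑ m, g m u f := Finset.sum_congr rfl fun u _ => Finset.sum_comm
  calc (∑ u, ∑ f, cm.val (fun m => A m ∪ A' m) u f) - ∑ u, ∑ f, cm.val A' u f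
      = ∑ u, ∑ f, (cm.val (fun m => A m ∪ A' m) u f - cm.val A' u f) := by
        rw [← Finset.sum_sub_distrib]
        exact Finset.sum_congr rfl fun u _ => (Finset.sum_sub_distrib _ _).symm
    _ ≤ ∑ u, ∑ f, ∑ m : M,
        (cm.val (Function.update A' m (A' m ∪ A m)) u f - cm.val A' u f) := by
        refine Finset.sum_le_sum fun u _ => Finset.sum_le_sum fun f _ => ?_
        exact cm.val_pointwise A A' u f
    _ = ∑ m : M, ∑ u, ∑ f,
        (cm.val (Function.update A' m (A' m ∪ A m)) u f - cm.val A' u f) := (swap3 _).symm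
    _ = ∑ m : M, ((∑ u, ∑ f, cm.val (Function.update A' m (A' m ∪ A m)) u f)
        - ∑ u, ∑ f, cm.val A' u f) := by
        refine Finset.sum_congr rfl fun m _ => ?_
        rw [← Finset.sum_sub_distrib]
        exact Finset.sum_congr rfl fun u _ => Finset.sum_sub_distrib _ _
end

section
/- The total expected reward has diminishing returns (is submodular): if B and C are cache strategies with B_m ⊆ C_m for every m ∈ ℳ, then for every SBS m₀ ∈ ℳ and every set of files s ⊆ ℱ, R_total(C[m₀ := C_{m₀} ∪ s]) − R_total(C) ≤ R_total(B[m₀ := B_{m₀} ∪ s]) − R_total(B), where A[m := t] denotes the strategy obtained from A by replacing the cache of SBS m with t (this single inequality underlies steps (c) and (e) of the proof of Lemma 1). -/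
open Finset
open scoped Classical

namespace CacheModel

variable {U M F : Type*} [Fintype U] [Fintype M] [Fintype F]

/-- Nonnegative weight of SBS `m` for user `u`. -/
noncomputable def wgt (cm : CacheModel U M F) (u : U) (m : M) : NNReal :=
  Real.toNNReal (cm.d0 - cm.d m u)

/-- Neighbor SBSs of `u` caching `f` under `A`. -/
noncomputable def srv (cm : CacheModel U M F) (A : M → Finset F) (u : U) (f : F) : Finset M :=
  (cm.neigh u).filter fun m => f ∈ A m

lemma Wval_eq (cm : CacheModel U M F) (A : M → Finset F) (u : U) (f : F) :
    ∑ m ∈ cm.neigh u, (cm.d0 - cm.d m u) * (if cm.serves A u f m then 1 else 0)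
      = ((cm.srv A u f).sup (cm.wgt u)).toReal := by
  by_cases hS : (cm.srv A u f).Nonempty
  · obtain ⟨m₁, hm₁S, hmin⟩ := Finset.exists_min_image (cm.srv A u f) (fun m => cm.d m u) hS
    have hm₁n : m₁ ∈ cm.neigh u := (Finset.mem_filter.1 hm₁S).1
    have hm₁A : f ∈ A m₁ := (Finset.mem_filter.1 hm₁S).2
    have hserves : cm.serves A u f m₁ := by
      refine ⟨hm₁n, hm₁A, fun n hn hdn hfn => ?_⟩
      have : n ∈ cm.srv A u f := Finset.mem_filter.2 ⟨hn, hfn⟩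
      exact absurd (hmin n this) (not_le.2 hdn)
    have huniq : ∀ m, cm.serves A u f m → m = m₁ := by
      intro m hm
      have hmn := hm.1
      have hmS : m ∈ cm.srv A u f := Finset.mem_filter.2 ⟨hm.1, hm.2.1⟩
      have h1 : cm.d m₁ u ≤ cm.d m u := hmin m hmS
      have h2 : ¬ cm.d m₁ u < cm.d m u := fun hlt => hm.2.2 m₁ hm₁n hlt hm₁A
      exact cm.d_inj u m hmn m₁ hm₁n (le_antisymm (not_lt.1 h2) h1)
    have hsum : ∑ m ∈ cm.neigh u, (cm.d0 - cm.d m u) * (if cm.serves A u f m then 1 else 0)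
        = cm.d0 - cm.d m₁ u := by
      rw [Finset.sum_eq_single_of_mem m₁ hm₁n]
      · simp [hserves]
      · intro m hm hne
        have : ¬ cm.serves A u f m := fun h => hne (huniq m h)
        simp [this]
    have hsup : (cm.srv A u f).sup (cm.wgt u) = cm.wgt u m₁ := by
      refine le_antisymm (Finset.sup_le fun n hn => ?_) (Finset.le_sup hm₁S)
      exact Real.toNNReal_mono (by linarith [hmin n hn])
    rw [hsum, hsup]
    exact (Real.coe_toNNReal _ (by linarith [cm.d_lt_d0 u m₁ hm₁n])).symm
  · rw [Finset.not_nonempty_iff_eq_empty] at hS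
    rw [hS]
    simp only [Finset.sup_empty]
    rw [Finset.sum_eq_zero]
    · simp
    · intro m hm
      have : ¬ cm.serves A u f m := by
        intro h
        have : m ∈ cm.srv A u f := Finset.mem_filter.2 ⟨h.1, h.2.1⟩
        simp [hS] at this
      simp [this]

lemma Rtot_eq (cm : CacheModel U M F) (A : M → Finset F) :
    cm.Rtot A = ∑ u, ∑ f, cm.p u f * ((cm.srv A u f).sup (cm.wgt u)).toReal := by
  unfold Rtot r users
  rw [Finset.sum_comm]
  conv_rhs => rw [Finset.sum_comm]
  refine Finset.sum_congr rfl fun f _ => ?_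
  have : ∀ m : M, ∑ u ∈ Finset.univ.filter (fun u => m ∈ cm.neigh u),
      cm.p u f * (cm.d0 - cm.d m u) * (if cm.serves A u f m then 1 else 0)
      = ∑ u : U, if m ∈ cm.neigh u then
          cm.p u f * (cm.d0 - cm.d m u) * (if cm.serves A u f m then 1 else 0) else 0 := by
    intro m; rw [Finset.sum_filter]
  rw [Finset.sum_congr rfl fun m _ => this m]
  rw [Finset.sum_comm]
  refine Finset.sum_congr rfl fun u _ => ?_
  rw [Finset.sum_ite_mem, Finset.univ_inter, ← cm.Wval_eq A u f, Finset.mul_sum]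
  exact Finset.sum_congr rfl fun m _ => by ring

lemma srv_update (cm : CacheModel U M F) (A : M → Finset F) (m₀ : M) (s : Finset F)
    (u : U) (f : F) :
    cm.srv (Function.update A m₀ (A m₀ ∪ s)) u f
      = cm.srv A u f ∪ ((cm.neigh u).filter fun m => m = m₀ ∧ f ∈ s) := by
  ext m
  by_cases h : m = m₀ <;> simp [srv, Function.update, h] <;> tauto

lemma srv_mono (cm : CacheModel U M F) {A B : M → Finset F} (h : ∀ m, A m ⊆ B m)
    (u : U) (f : F) : cm.srv A u f ⊆ cm.srv B u f := by
  intro m hm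
  simp only [srv, Finset.mem_filter] at hm ⊢
  exact ⟨hm.1, h m hm.2⟩

end CacheModel

/-- **Diminishing returns (submodularity) of the total expected reward**
(underlying steps (c) and (e) of the proof of Lemma 1). -/
theorem Rtot_diminishing_returns
    {U M F : Type*} [Fintype U] [Fintype M] [Fintype F]
    (cm : CacheModel U M F) (B C : M → Finset F)
    (hBC : ∀ m, B m ⊆ C m) (m₀ : M) (s : Finset F) :
    cm.Rtot (Function.update C m₀ (C m₀ ∪ s)) - cm.Rtot C ≤
      cm.Rtot (Function.update B m₀ (B m₀ ∪ s)) - cm.Rtot B := by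
  rw [cm.Rtot_eq, cm.Rtot_eq, cm.Rtot_eq, cm.Rtot_eq]
  rw [← Finset.sum_sub_distrib, ← Finset.sum_sub_distrib]
  refine Finset.sum_le_sum fun u _ => ?_
  rw [← Finset.sum_sub_distrib, ← Finset.sum_sub_distrib]
  refine Finset.sum_le_sum fun f _ => ?_
  rw [cm.srv_update B m₀ s u f, cm.srv_update C m₀ s u f,
    Finset.sup_union, Finset.sup_union]
  set b : NNReal := (cm.srv B u f).sup (cm.wgt u)
  set c : NNReal := (cm.srv C u f).sup (cm.wgt u)
  set t : NNReal := ((cm.neigh u).filter fun m => m = m₀ ∧ f ∈ s).sup (cm.wgt u)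
  have hbc : (b : ℝ) ≤ (c : ℝ) :=
    NNReal.coe_le_coe.2 (Finset.sup_mono (cm.srv_mono hBC u f))
  have hkey : ((c ⊔ t : NNReal) : ℝ) - (c : ℝ) ≤ ((b ⊔ t : NNReal) : ℝ) - (b : ℝ) := by
    rw [NNReal.coe_max, NNReal.coe_max]
    rcases le_total (t : ℝ) (b : ℝ) with h | h
    · rw [max_eq_left h, max_eq_left (h.trans hbc)]
      linarith
    · rcases le_total (t : ℝ) (c : ℝ) with h2 | h2
      · rw [max_eq_left h2, max_eq_right h]; linarith
      · rw [max_eq_right h2, max_eq_right h]; linarith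
  have hp := cm.p_nonneg u f
  nlinarith [mul_le_mul_of_nonneg_left hkey hp]
end

section
/- Uniform concentration over sample sizes (union-bound step of the proof of Lemma 2): let (X_i)_{i≥1} be i.i.d. real random variables taking values almost surely in [0, B] with B > 0 and mean μ, and let X̄_s = (1/s)·Σ_{i=1}^s X_i. Then for every integer t ≥ 1, P( ∃ s ∈ {1, …, t} : |X̄_s − μ| ≥ B·√(3·ln t / (2s)) ) ≤ 2·t^{−2}. Consequently, if T is any {1,…,t}-valued random variable on the same space, P( |X̄_T − μ| ≥ B·√(3·ln t / (2T)) ) ≤ 2·t^{−2}. -/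
open MeasureTheory ProbabilityTheory Finset

private lemma bern_pos {p : ℝ} (hp0 : 0 ≤ p) (hp1 : p ≤ 1) (x : ℝ) :
    0 < 1 - p + p * Real.exp x := by
  nlinarith [Real.exp_pos x, mul_nonneg hp0 (Real.exp_pos x).le,
    mul_nonneg (sub_nonneg.2 hp1) (Real.exp_pos x).le]

private lemma hoeff_log_ineq {p : ℝ} (hp0 : 0 ≤ p) (hp1 : p ≤ 1) (h : ℝ) :
    Real.log (1 - p + p * Real.exp h) ≤ p * h + h ^ 2 / 8 := by
  have hDpos := bern_pos hp0 hp1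
  set q : ℝ → ℝ := fun x => p * Real.exp x / (1 - p + p * Real.exp x) with hq
  have hq0 : ∀ x, 0 ≤ q x := fun x =>
    div_nonneg (mul_nonneg hp0 (Real.exp_pos x).le) (hDpos x).le
  have hq1 : ∀ x, q x ≤ 1 := fun x => by
    rw [hq, div_le_one (hDpos x)]; linarith
  have hqd : ∀ x, HasDerivAt q (q x * (1 - q x)) x := by
    intro x
    have hnum : HasDerivAt (fun x => p * Real.exp x) (p * Real.exp x) x :=
      (Real.hasDerivAt_exp x).const_mul p
    have hden : HasDerivAt (fun x => 1 - p + p * Real.exp x) (p * Real.exp x) x :=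
      hnum.const_add (1 - p)
    have hd := hnum.div hden (hDpos x).ne'
    have hd' : HasDerivAt q ((p * Real.exp x * (1 - p + p * Real.exp x) - p * Real.exp x * (p * Real.exp x)) / (1 - p + p * Real.exp x) ^ 2) x := hd
    convert hd' using 1
    rw [hq]
    field_simp [(hDpos x).ne']
  have hqder_le : ∀ x, q x * (1 - q x) ≤ 1 / 4 := fun x => by
    nlinarith [sq_nonneg (q x - 1 / 2)]
  have hqder_nn : ∀ x, 0 ≤ q x * (1 - q x) := fun x =>
    mul_nonneg (hq0 x) (by linarith [hq1 x])
  set g : ℝ → ℝ := fun x => p * x + x ^ 2 / 8 - Real.log (1 - p + p * Real.exp x) with hg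
  have hgd : ∀ x, HasDerivAt g (p + x / 4 - q x) x := by
    intro x
    have hden : HasDerivAt (fun x => 1 - p + p * Real.exp x) (p * Real.exp x) x :=
      ((Real.hasDerivAt_exp x).const_mul p).const_add (1 - p)
    have h3 := hden.log (hDpos x).ne'
    have h1 : HasDerivAt (fun y : ℝ => p * y + y ^ 2 / 8) (p + x / 4) x := by
      have : HasDerivAt (fun y : ℝ => p * y + y ^ 2 / 8) (p * 1 + ((2 : ℕ) : ℝ) * x ^ (2 - 1) / 8) x :=
        ((hasDerivAt_id x).const_mul p).add ((hasDerivAt_pow 2 x).div_const 8)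
      convert this using 1
      simp
      ring
    exact h1.sub h3
  have hg0 : g 0 = 0 := by simp [hg]
  have hq0' : q 0 = p := by
    rw [hq]
    simp
  have key : 0 ≤ g h := by
    rcases lt_trichotomy h 0 with hneg | hzero | hpos
    · -- h < 0
      obtain ⟨c, hc, hceq⟩ := exists_hasDerivAt_eq_slope g (fun x => p + x / 4 - q x) hneg
        (fun x _ => (hgd x).continuousAt.continuousWithinAt) (fun x _ => hgd x)
      obtain ⟨d, hd, hdeq⟩ := exists_hasDerivAt_eq_slope q (fun x => q x * (1 - q x)) hc.2
        (fun x _ => (hqd x).continuousAt.continuousWithinAt) (fun x _ => hqd x)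
      rw [hq0'] at hdeq
      -- hdeq : q d * (1 - q d) = (p - q c) / (0 - c)
      have hc0 : c < 0 := hc.2
      have hqc : q c = p + q d * (1 - q d) * c := by
        have h2 : q d * (1 - q d) * (0 - c) = p - q c := (eq_div_iff (by linarith)).1 hdeq
        nlinarith [h2]
      have hqc' : p + c / 4 ≤ q c := by
        rw [hqc]
        have : q d * (1 - q d) * c ≥ (1 / 4) * c := by
          nlinarith [hqder_le d, hqder_nn d]
        linarith
      rw [hg0] at hceq
      -- hceq : p + c/4 - q c = (0 - g h)/(0 - h)
      have hgprime : p + c / 4 - q c ≤ 0 := by linarith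
      have hdiv : (0 - g h) / (0 - h) ≤ 0 := hceq ▸ hgprime
      rcases div_nonpos_iff.1 hdiv with ⟨h1', h2'⟩ | ⟨h1', h2'⟩ <;> linarith
    · simp [hzero, hg0]
    · -- h > 0
      obtain ⟨c, hc, hceq⟩ := exists_hasDerivAt_eq_slope g (fun x => p + x / 4 - q x) hpos
        (fun x _ => (hgd x).continuousAt.continuousWithinAt) (fun x _ => hgd x)
      obtain ⟨d, hd, hdeq⟩ := exists_hasDerivAt_eq_slope q (fun x => q x * (1 - q x)) hc.1
        (fun x _ => (hqd x).continuousAt.continuousWithinAt) (fun x _ => hqd x)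
      rw [hq0'] at hdeq
      have hc0 : 0 < c := hc.1
      have hqc : q c = p + q d * (1 - q d) * c := by
        have h2 : q d * (1 - q d) * (c - 0) = q c - p := (eq_div_iff (by linarith)).1 hdeq
        nlinarith [h2]
      have hqc' : q c ≤ p + c / 4 := by
        rw [hqc]
        have : q d * (1 - q d) * c ≤ (1 / 4) * c := by
          nlinarith [hqder_le d, hqder_nn d]
        linarith
      rw [hg0] at hceq
      have hgprime : 0 ≤ p + c / 4 - q c := by linarith
      have hdiv : 0 ≤ (g h - 0) / (h - 0) := hceq ▸ hgprime
      rcases div_nonneg_iff.1 hdiv with ⟨h1', h2'⟩ | ⟨h1', h2'⟩ <;> linarith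
  simp only [hg] at key
  linarith

private lemma hoeff_mgf {Ω : Type*} [MeasurableSpace Ω] (P : Measure Ω) [IsProbabilityMeasure P]
    (Y : Ω → ℝ) (hY : Measurable Y) {B μ : ℝ} (hB : 0 < B)
    (hbdd : ∀ᵐ ω ∂P, Y ω ∈ Set.Icc 0 B) (hmean : ∫ ω, Y ω ∂P = μ) (l : ℝ) :
    mgf Y P l ≤ Real.exp (l * μ + l ^ 2 * B ^ 2 / 8) := by
  have hYint : Integrable Y P :=
    (integrable_const B).mono' hY.aestronglyMeasurable
      (hbdd.mono fun ω h => by rw [Real.norm_eq_abs, abs_of_nonneg h.1]; exact h.2)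
  have hμ0 : 0 ≤ μ := by
    rw [← hmean]; exact integral_nonneg_of_ae (hbdd.mono fun ω h => h.1)
  have hμB : μ ≤ B := by
    rw [← hmean]
    calc ∫ ω, Y ω ∂P ≤ ∫ _ω, B ∂P :=
          integral_mono_ae hYint (integrable_const B) (hbdd.mono fun ω h => h.2)
      _ = B := by simp
  set c := Real.exp (l * B) with hc
  have hptw : ∀ᵐ ω ∂P, Real.exp (l * Y ω) ≤ 1 - Y ω / B + Y ω / B * c := by
    filter_upwards [hbdd] with ω hω
    have hθ0 : 0 ≤ Y ω / B := div_nonneg hω.1 hB.le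
    have hθ1 : Y ω / B ≤ 1 := (div_le_one hB).2 hω.2
    have hcvx := convexOn_exp.2 (Set.mem_univ (0 : ℝ)) (Set.mem_univ (l * B))
      (by linarith : (0 : ℝ) ≤ 1 - Y ω / B) hθ0 (by ring)
    simp only [smul_eq_mul, mul_zero, zero_add, Real.exp_zero, mul_one] at hcvx
    have harg : Y ω / B * (l * B) = l * Y ω := by field_simp
    rw [harg] at hcvx
    linarith
  have hexpint : Integrable (fun ω => Real.exp (l * Y ω)) P := by
    refine (integrable_const (Real.exp (|l| * B))).mono'
      ((hY.const_mul l).exp).aestronglyMeasurable ?_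
    filter_upwards [hbdd] with ω hω
    rw [Real.norm_eq_abs, abs_of_nonneg (Real.exp_pos _).le]
    apply Real.exp_le_exp.2
    calc l * Y ω ≤ |l * Y ω| := le_abs_self _
      _ = |l| * |Y ω| := abs_mul _ _
      _ ≤ |l| * B := by
          refine mul_le_mul_of_nonneg_left ?_ (abs_nonneg l)
          rw [abs_of_nonneg hω.1]; exact hω.2
  have hRHSint : Integrable (fun ω => 1 - Y ω / B + Y ω / B * c) P :=
    ((integrable_const (1 : ℝ)).sub (hYint.div_const B)).add ((hYint.div_const B).mul_const c)
  have hineq : mgf Y P l ≤ 1 - μ / B + μ / B * c := by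
    have hmono := integral_mono_ae hexpint hRHSint hptw
    rw [mgf]
    refine hmono.trans_eq ?_
    have hre : ∀ a : Ω, 1 - Y a / B + Y a / B * c = 1 + Y a * ((c - 1) / B) := by
      intro a; field_simp; ring
    simp_rw [hre]
    rw [integral_add (integrable_const (1 : ℝ)) (hYint.mul_const _), integral_const,
      integral_mul_const, hmean]
    simp only [measure_univ, ENNReal.toReal_one, probReal_univ, smul_eq_mul, mul_one, one_mul]
    field_simp
    ring
  refine hineq.trans ?_
  set p := μ / B with hp
  have hp0 : 0 ≤ p := div_nonneg hμ0 hB.le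
  have hp1 : p ≤ 1 := (div_le_one hB).2 hμB
  have hlog := hoeff_log_ineq hp0 hp1 (l * B)
  have hpos := bern_pos hp0 hp1 (l * B)
  have hle : 1 - p + p * Real.exp (l * B) ≤ Real.exp (p * (l * B) + (l * B) ^ 2 / 8) :=
    (Real.log_le_iff_le_exp hpos).1 hlog
  have harg : p * (l * B) + (l * B) ^ 2 / 8 = l * μ + l ^ 2 * B ^ 2 / 8 := by
    rw [hp]; field_simp
  rw [harg] at hle
  exact hle

/-- **Union-bound step of the proof of Lemma 2**: for an i.i.d. sequence of random
variables taking values a.s. in `[0, B]` with mean `μ` and empirical means `X̄_s`,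
for every integer `t ≥ 1`,
`P(∃ s ∈ {1,…,t}, |X̄_s − μ| ≥ B·√(3·ln t / (2s))) ≤ 2·t⁻²`; consequently, for any
`{1,…,t}`-valued random variable `T`,
`P(|X̄_T − μ| ≥ B·√(3·ln t / (2T))) ≤ 2·t⁻²`. -/
theorem empirical_mean_uniform_concentration
    {Ω : Type*} [MeasurableSpace Ω] (P : Measure Ω) [IsProbabilityMeasure P]
    (X : ℕ → Ω → ℝ) (B μ : ℝ) (hB : 0 < B)
    (hmeas : ∀ i, Measurable (X i))
    (hindep : iIndepFun X P)
    (hident : ∀ i, IdentDistrib (X i) (X 0) P P)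
    (hbdd : ∀ i, ∀ᵐ ω ∂P, X i ω ∈ Set.Icc 0 B)
    (hmean : ∀ i, ∫ ω, X i ω ∂P = μ)
    (t : ℕ) (ht : 1 ≤ t) :
    (P {ω | ∃ s ∈ Finset.Icc 1 t,
          B * Real.sqrt (3 * Real.log t / (2 * s)) ≤
            |(∑ i ∈ Finset.range s, X i ω) / s - μ|}
        ≤ ENNReal.ofReal (2 / (t : ℝ) ^ 2))
    ∧ (∀ T : Ω → ℕ, (∀ ω, T ω ∈ Finset.Icc 1 t) →
        P {ω | B * Real.sqrt (3 * Real.log t / (2 * T ω)) ≤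
              |(∑ i ∈ Finset.range (T ω), X i ω) / (T ω) - μ|}
          ≤ ENNReal.ofReal (2 / (t : ℝ) ^ 2)) := by
  have htR : (1 : ℝ) ≤ (t : ℝ) := by exact_mod_cast ht
  have htpos : (0 : ℝ) < (t : ℝ) := by linarith
  have hlogt : 0 ≤ Real.log t := Real.log_nonneg htR
  have hint : ∀ (l : ℝ) (i : ℕ), Integrable (fun ω => Real.exp (l * X i ω)) P := by
    intro l i
    refine (integrable_const (Real.exp (|l| * B))).mono'
      (((hmeas i).const_mul l).exp).aestronglyMeasurable ?_
    filter_upwards [hbdd i] with ω hω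
    rw [Real.norm_eq_abs, abs_of_nonneg (Real.exp_pos _).le]
    apply Real.exp_le_exp.2
    calc l * X i ω ≤ |l * X i ω| := le_abs_self _
      _ = |l| * |X i ω| := abs_mul _ _
      _ ≤ |l| * B := by
          refine mul_le_mul_of_nonneg_left ?_ (abs_nonneg l)
          rw [abs_of_nonneg hω.1]; exact hω.2
  -- per-sample-size tail bound
  have tail : ∀ s ∈ Finset.Icc 1 t,
      P {ω | B * Real.sqrt (3 * Real.log t / (2 * s)) ≤
          |(∑ i ∈ Finset.range s, X i ω) / s - μ|}
        ≤ ENNReal.ofReal (2 / (t : ℝ) ^ 3) := by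
    intro s hs
    have hs1 : 1 ≤ s := (Finset.mem_Icc.1 hs).1
    have hsR : (0 : ℝ) < (s : ℝ) := by exact_mod_cast hs1
    set ε := B * Real.sqrt (3 * Real.log t / (2 * s)) with hε
    have hεnn : 0 ≤ ε := mul_nonneg hB.le (Real.sqrt_nonneg _)
    have hεsq : ε ^ 2 = B ^ 2 * (3 * Real.log t / (2 * s)) := by
      rw [hε, mul_pow, Real.sq_sqrt (by positivity)]
    have hmgf : ∀ l : ℝ, mgf (∑ i ∈ Finset.range s, X i) P l
        ≤ Real.exp (l * μ + l ^ 2 * B ^ 2 / 8) ^ s := by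
      intro l
      rw [hindep.mgf_sum hmeas]
      calc ∏ i ∈ Finset.range s, mgf (X i) P l
          ≤ ∏ _i ∈ Finset.range s, Real.exp (l * μ + l ^ 2 * B ^ 2 / 8) :=
            Finset.prod_le_prod (fun i _ => mgf_nonneg)
              (fun i _ => hoeff_mgf P (X i) (hmeas i) hB (hbdd i) (hmean i) l)
        _ = _ := by rw [Finset.prod_const, Finset.card_range]
    have hup : (P {ω | (s : ℝ) * μ + (s : ℝ) * ε ≤ (∑ i ∈ Finset.range s, X i) ω}).toReal
        ≤ Real.exp (-(3 * Real.log t)) := by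
      set l := 4 * ε / B ^ 2 with hl
      have hl0 : 0 ≤ l := by positivity
      have h1 := measure_ge_le_exp_mul_mgf (μ := P) (X := ∑ i ∈ Finset.range s, X i)
        ((s : ℝ) * μ + (s : ℝ) * ε) hl0
        (hindep.integrable_exp_mul_sum hmeas fun i _ => hint l i)
      refine h1.trans ?_
      calc Real.exp (-l * ((s : ℝ) * μ + (s : ℝ) * ε)) * mgf (∑ i ∈ Finset.range s, X i) P l
          ≤ Real.exp (-l * ((s : ℝ) * μ + (s : ℝ) * ε)) *
              Real.exp (l * μ + l ^ 2 * B ^ 2 / 8) ^ s :=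
            mul_le_mul_of_nonneg_left (hmgf l) (Real.exp_pos _).le
        _ = Real.exp (-l * ((s : ℝ) * μ + (s : ℝ) * ε) + s * (l * μ + l ^ 2 * B ^ 2 / 8)) := by
            rw [← Real.exp_nat_mul, ← Real.exp_add]
        _ = Real.exp (-(3 * Real.log t)) := by
            congr 1
            have hkey' : (s : ℝ) * Real.sqrt (3 * Real.log t / (2 * s)) ^ 2
                = 3 * Real.log t / 2 := by
              rw [Real.sq_sqrt (by positivity)]; field_simp
            rw [hl]
            field_simp
            linear_combination (-16 * B ^ 2) * hkey'
    have hlow : (P {ω | (∑ i ∈ Finset.range s, X i) ω ≤ (s : ℝ) * μ - (s : ℝ) * ε}).toReal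
        ≤ Real.exp (-(3 * Real.log t)) := by
      set l := -(4 * ε / B ^ 2) with hl
      have hl0 : l ≤ 0 := by rw [hl]; exact neg_nonpos.2 (by positivity)
      have h1 := measure_le_le_exp_mul_mgf (μ := P) (X := ∑ i ∈ Finset.range s, X i)
        ((s : ℝ) * μ - (s : ℝ) * ε) hl0
        (hindep.integrable_exp_mul_sum hmeas fun i _ => hint l i)
      refine h1.trans ?_
      calc Real.exp (-l * ((s : ℝ) * μ - (s : ℝ) * ε)) * mgf (∑ i ∈ Finset.range s, X i) P l
          ≤ Real.exp (-l * ((s : ℝ) * μ - (s : ℝ) * ε)) *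
              Real.exp (l * μ + l ^ 2 * B ^ 2 / 8) ^ s :=
            mul_le_mul_of_nonneg_left (hmgf l) (Real.exp_pos _).le
        _ = Real.exp (-l * ((s : ℝ) * μ - (s : ℝ) * ε) + s * (l * μ + l ^ 2 * B ^ 2 / 8)) := by
            rw [← Real.exp_nat_mul, ← Real.exp_add]
        _ = Real.exp (-(3 * Real.log t)) := by
            congr 1
            have hkey' : (s : ℝ) * Real.sqrt (3 * Real.log t / (2 * s)) ^ 2
                = 3 * Real.log t / 2 := by
              rw [Real.sq_sqrt (by positivity)]; field_simp
            rw [hl]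
            field_simp
            linear_combination (-16 * B ^ 2) * hkey'
    have hsub : {ω | ε ≤ |(∑ i ∈ Finset.range s, X i ω) / s - μ|} ⊆
        {ω | (s : ℝ) * μ + (s : ℝ) * ε ≤ (∑ i ∈ Finset.range s, X i) ω} ∪
        {ω | (∑ i ∈ Finset.range s, X i) ω ≤ (s : ℝ) * μ - (s : ℝ) * ε} := by
      intro ω hω
      simp only [Set.mem_setOf_eq, Set.mem_union, Finset.sum_apply] at hω ⊢
      rcases le_abs.1 hω with h1 | h1
      · left
        have h2 : μ + ε ≤ (∑ i ∈ Finset.range s, X i ω) / s := by linarith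
        have h3 := (le_div_iff₀ hsR).1 h2
        nlinarith [h3]
      · right
        have h2 : (∑ i ∈ Finset.range s, X i ω) / s ≤ μ - ε := by linarith
        have h3 := (div_le_iff₀ hsR).1 h2
        nlinarith [h3]
    have hexp3 : Real.exp (-(3 * Real.log t)) = 1 / (t : ℝ) ^ 3 := by
      rw [Real.exp_neg, show (3 : ℝ) * Real.log t = Real.log ((t : ℝ) ^ 3) by
        rw [Real.log_pow]; norm_num, Real.exp_log (by positivity), one_div]
    calc P {ω | ε ≤ |(∑ i ∈ Finset.range s, X i ω) / s - μ|}
        ≤ P {ω | (s : ℝ) * μ + (s : ℝ) * ε ≤ (∑ i ∈ Finset.range s, X i) ω} +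
            P {ω | (∑ i ∈ Finset.range s, X i) ω ≤ (s : ℝ) * μ - (s : ℝ) * ε} :=
          (measure_mono hsub).trans (measure_union_le _ _)
      _ ≤ ENNReal.ofReal (Real.exp (-(3 * Real.log t))) +
            ENNReal.ofReal (Real.exp (-(3 * Real.log t))) := by
          gcongr
          · rw [← ENNReal.ofReal_toReal (measure_ne_top P _)]
            exact ENNReal.ofReal_le_ofReal hup
          · rw [← ENNReal.ofReal_toReal (measure_ne_top P _)]
            exact ENNReal.ofReal_le_ofReal hlow
      _ = ENNReal.ofReal (2 / (t : ℝ) ^ 3) := by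
          rw [← ENNReal.ofReal_add (Real.exp_pos _).le (Real.exp_pos _).le, hexp3]
          congr 1
          ring
  -- union bound
  have hmain : P {ω | ∃ s ∈ Finset.Icc 1 t,
        B * Real.sqrt (3 * Real.log t / (2 * s)) ≤
          |(∑ i ∈ Finset.range s, X i ω) / s - μ|}
      ≤ ENNReal.ofReal (2 / (t : ℝ) ^ 2) := by
    have hset : {ω | ∃ s ∈ Finset.Icc 1 t,
        B * Real.sqrt (3 * Real.log t / (2 * s)) ≤
          |(∑ i ∈ Finset.range s, X i ω) / s - μ|} =
        ⋃ s ∈ Finset.Icc 1 t, {ω | B * Real.sqrt (3 * Real.log t / (2 * s)) ≤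
          |(∑ i ∈ Finset.range s, X i ω) / s - μ|} := by
      ext ω
      simp [Set.mem_iUnion]
    rw [hset]
    calc P (⋃ s ∈ Finset.Icc 1 t, {ω | B * Real.sqrt (3 * Real.log t / (2 * s)) ≤
            |(∑ i ∈ Finset.range s, X i ω) / s - μ|})
        ≤ ∑ s ∈ Finset.Icc 1 t, P {ω | B * Real.sqrt (3 * Real.log t / (2 * s)) ≤
            |(∑ i ∈ Finset.range s, X i ω) / s - μ|} := measure_biUnion_finset_le _ _
      _ ≤ ∑ s ∈ Finset.Icc 1 t, ENNReal.ofReal (2 / (t : ℝ) ^ 3) := Finset.sum_le_sum tail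
      _ = (t : ENNReal) * ENNReal.ofReal (2 / (t : ℝ) ^ 3) := by
          rw [Finset.sum_const, Nat.card_Icc]
          simp [nsmul_eq_mul]
      _ ≤ ENNReal.ofReal (2 / (t : ℝ) ^ 2) := by
          rw [← ENNReal.ofReal_natCast t, ← ENNReal.ofReal_mul (by positivity)]
          refine ENNReal.ofReal_le_ofReal (le_of_eq ?_)
          field_simp
  refine ⟨hmain, fun T hT => le_trans (measure_mono ?_) hmain⟩
  intro ω hω
  exact ⟨T ω, hT ω, hω⟩
end

section
/- Optimistic-estimate chain (key deterministic step in the proof of Lemma 2): in the combinatorial reward framework, let μ, μ̂ : ℬ → ℝ satisfy μ_b ≤ μ̂_b for all b ∈ ℬ, let Λ ≥ 0 and α ∈ (0,1], and let Â ∈ 𝒜 be an action with r(μ̂, Â) ≥ α·opt_{μ̂} and |μ̂_b − μ_b| ≤ 2Λ for all b ∈ arms(Â). Then r(μ, Â) + f(2Λ) ≥ α·opt_μ. In particular, if 𝒜_B = {A ∈ 𝒜 : r(μ,A) < α·opt_μ} is nonempty, Δ_min = α·opt_μ − max_{A∈𝒜_B} r(μ,A), and f(2Λ) < Δ_min, then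 Â ∉ 𝒜_B. -/
open Finset

/-- **Optimistic-estimate chain (key deterministic step in the proof of Lemma 2)**:
in the combinatorial reward framework with monotone, bounded-smooth reward `r`,
if `μ ≤ μ̂` componentwise, `Â` is an `α`-approximate maximizer for `μ̂`, and the
estimates of the arms used by `Â` are `2Λ`-close to `μ`, then
`r(μ, Â) + f(2Λ) ≥ α·opt_μ`; in particular, if the bad-action set is nonempty and
`f(2Λ) < Δ_min`, then `Â` is not a bad action. -/
theorem optimistic_estimate_chain
    {Arm Action : Type*} [Fintype Arm] [Fintype Action] [Nonempty Action]
    (arms : Action → Finset Arm)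
    (r : (Arm → ℝ) → Action → ℝ)
    (f : ℝ → ℝ)
    (hmono : ∀ (ν ν' : Arm → ℝ), (∀ b, ν b ≤ ν' b) → ∀ a, r ν a ≤ r ν' a)
    (hf_nondecr : ∀ x y : ℝ, 0 ≤ x → x ≤ y → f x ≤ f y)
    (hf_nonneg : ∀ x : ℝ, 0 ≤ x → 0 ≤ f x)
    (hsmooth : ∀ (ν ν' : Arm → ℝ) (a : Action) (lam : ℝ), 0 ≤ lam →
      (∀ b ∈ arms a, |ν b - ν' b| ≤ lam) → |r ν a - r ν' a| ≤ f lam)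
    (μ μhat : Arm → ℝ) (hle : ∀ b, μ b ≤ μhat b)
    (Λ : ℝ) (hΛ : 0 ≤ Λ)
    (α : ℝ) (hα0 : 0 < α) (hα1 : α ≤ 1)
    (Ahat : Action)
    (happrox : α * (⨆ a : Action, r μhat a) ≤ r μhat Ahat)
    (hclose : ∀ b ∈ arms Ahat, |μhat b - μ b| ≤ 2 * Λ) :
    α * (⨆ a : Action, r μ a) ≤ r μ Ahat + f (2 * Λ)
    ∧ ((∃ a : Action, r μ a < α * (⨆ a : Action, r μ a)) →
        ∀ Δmin : ℝ,
          Δmin = α * (⨆ a : Action, r μ a) -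
            (⨆ a : {a : Action // r μ a < α * (⨆ a' : Action, r μ a')}, r μ a.1) →
          f (2 * Λ) < Δmin →
          ¬ (r μ Ahat < α * (⨆ a : Action, r μ a))) := by

  have hbdd : ∀ ν : Arm → ℝ, BddAbove (Set.range (r ν)) :=
    fun ν => (Set.finite_range _).bddAbove
  have hsup_le : (⨆ a : Action, r μ a) ≤ ⨆ a : Action, r μhat a :=
    ciSup_mono (hbdd μhat) (fun a => hmono μ μhat hle a)
  have hsm : |r μhat Ahat - r μ Ahat| ≤ f (2 * Λ) :=
    hsmooth μhat μ Ahat (2 * Λ) (by linarith) hclose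
  have hmain : α * (⨆ a : Action, r μ a) ≤ r μ Ahat + f (2 * Λ) := by
    have h1 : α * (⨆ a : Action, r μ a) ≤ α * (⨆ a : Action, r μhat a) := by
      exact mul_le_mul_of_nonneg_left hsup_le hα0.le
    have h2 := abs_le.mp hsm
    linarith
  refine ⟨hmain, ?_⟩
  rintro ⟨a0, ha0⟩ Δmin hΔ hfΔ hbad
  have : Nonempty {a : Action // r μ a < α * (⨆ a' : Action, r μ a')} := ⟨⟨a0, ha0⟩⟩
  have hleS : r μ Ahat ≤ ⨆ a : {a : Action // r μ a < α * (⨆ a' : Action, r μ a')}, r μ a.1 := by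
    have := le_ciSup (f := fun a : {a : Action // r μ a < α * (⨆ a' : Action, r μ a')} => r μ a.1)
      ((Set.finite_range _).bddAbove) ⟨Ahat, hbad⟩
    exact this
  have h2 := abs_le.mp hsm
  linarith
end
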